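/- arXiv:2501.14157 — 2 statements merged into one kernel-verified Lean document; each statement's English description precedes it below -/
import Mathlib

section
/- If λ is a strictly antidominant coweight (⟨λ, α⟩ < 0 for every positive root α), then t^λ is of maximal length in its left coset t^λ · W_f; in particular ℓ(t^λ · y) = ℓ(t^λ) − ℓ(y) for every y in the finite Weyl group W_f. -/
/-!
Setting: a finite crystallographic root system, abstracted as follows.
`Λ` is the coweight lattice, `Wf` the finite Weyl group acting on `Λ` and on the
(finite) set of roots `Φ`, `pair α` is the pairing `⟨-, α⟩ : Λ →+ ℤ` with the root `α`,
and `pos α` says that `α` is a positive root.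
-/

open scoped Classical

variable {Λ : Type*} [AddCommGroup Λ]
variable {Wf : Type*} [Group Wf]
variable {Φ : Type*} [Fintype Φ]
variable [MulAction Wf Φ] [DistribMulAction Wf Λ]

/-- The length `ℓ(t^λ w)` of the element `t^λ w` of the extended affine Weyl
group `W = Wf ⋉ Λ`:
`ℓ(t^λ w) = Σ_{α ∈ Φ⁺, w⁻¹α ∈ Φ⁺} |⟨λ, α⟩| + Σ_{α ∈ Φ⁺, w⁻¹α ∈ Φ⁻} |⟨λ, α⟩ + 1|`. -/
noncomputable def tlen (pair : Φ → Λ →+ ℤ) (pos : Φ → Prop) (lam : Λ) (w : Wf) : ℤ :=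
  ∑ α ∈ Finset.univ.filter (fun α => pos α ∧ pos (w⁻¹ • α)), |pair α lam| +
    ∑ α ∈ Finset.univ.filter (fun α => pos α ∧ ¬ pos (w⁻¹ • α)), |pair α lam + 1|

/-- The length of an element of the finite Weyl group: the number of positive roots
made negative. -/
noncomputable def flen (pos : Φ → Prop) (y : Wf) : ℕ :=
  (Finset.univ.filter (fun α => pos α ∧ ¬ pos (y • α))).card

/-- If `λ` is a strictly antidominant coweight (`⟨λ, α⟩ < 0` for every
positive root `α`), then `t^λ` is of maximal length in its left coset `t^λ · Wf`:
for every `y ∈ Wf`, `ℓ(t^λ · y) = ℓ(t^λ) - ℓ(y)`. -/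
theorem length_translation_mul_of_strictly_antidominant (pair : Φ → Λ →+ ℤ)
    (pos : Φ → Prop) (lam : Λ) (hlam : ∀ α, pos α → pair α lam < 0) (y : Wf) :
    tlen pair pos lam y = tlen pair pos lam (1 : Wf) - (flen pos y : ℤ) := by
  classical
  set S := Finset.univ.filter (fun α : Φ => pos α) with hS
  have key : (S.filter (fun α => pos (y • α))).card
      = (S.filter (fun α => pos (y⁻¹ • α))).card := by
    apply Finset.card_bij (fun α _ => y • α)
    · intro a ha
      simp only [hS, Finset.mem_filter, Finset.mem_univ, true_and] at ha ⊢
      exact ⟨ha.2, by simpa using ha.1⟩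
    · intro a _ b _ h
      exact smul_left_cancel _ h
    · intro b hb
      simp only [hS, Finset.mem_filter, Finset.mem_univ, true_and] at hb
      exact ⟨y⁻¹ • b, by simp [hS, hb.1, hb.2], by simp⟩
  unfold tlen flen
  have h1 : Finset.univ.filter (fun α : Φ => pos α ∧ pos ((1:Wf)⁻¹ • α)) = S := by
    ext α; simp [hS]
  have h2 : Finset.univ.filter (fun α : Φ => pos α ∧ ¬ pos ((1:Wf)⁻¹ • α)) = ∅ := by
    ext α; simp
  have h3 : Finset.univ.filter (fun α : Φ => pos α ∧ pos (y⁻¹ • α))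
      = S.filter (fun α => pos (y⁻¹ • α)) := by
    rw [hS, Finset.filter_filter]
  have h4 : Finset.univ.filter (fun α : Φ => pos α ∧ ¬ pos (y⁻¹ • α))
      = S.filter (fun α => ¬ pos (y⁻¹ • α)) := by
    rw [hS, Finset.filter_filter]
  have h5 : Finset.univ.filter (fun α : Φ => pos α ∧ ¬ pos (y • α))
      = S.filter (fun α => ¬ pos (y • α)) := by
    rw [hS, Finset.filter_filter]
  rw [h1, h2, h3, h4, h5, Finset.sum_empty, add_zero]
  have hstep : ∑ α ∈ S.filter (fun α => ¬ pos (y⁻¹ • α)), |pair α lam + 1|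
      = ∑ α ∈ S.filter (fun α => ¬ pos (y⁻¹ • α)), (|pair α lam| - 1) := by
    apply Finset.sum_congr rfl
    intro α hα
    simp only [hS, Finset.mem_filter, Finset.mem_univ, true_and] at hα
    have h := hlam α hα.1
    rw [abs_of_nonpos (by omega), abs_of_neg h]
    ring
  rw [hstep, Finset.sum_sub_distrib, Finset.sum_const, nsmul_eq_mul, mul_one]
  have hsum : ∑ α ∈ S.filter (fun α => pos (y⁻¹ • α)), |pair α lam|
      + ∑ α ∈ S.filter (fun α => ¬ pos (y⁻¹ • α)), |pair α lam|
      = ∑ α ∈ S, |pair α lam| := Finset.sum_filter_add_sum_filter_not S _ _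
  have hc1 : (S.filter (fun α => pos (y⁻¹ • α))).card
      + (S.filter (fun α => ¬ pos (y⁻¹ • α))).card = S.card :=
    Finset.card_filter_add_card_filter_not _
  have hc2 : (S.filter (fun α => pos (y • α))).card
      + (S.filter (fun α => ¬ pos (y • α))).card = S.card :=
    Finset.card_filter_add_card_filter_not _
  have hcard : (S.filter (fun α => ¬ pos (y⁻¹ • α))).card
      = (S.filter (fun α => ¬ pos (y • α))).card := by omega
  rw [hcard]
  omega
end

section
/- Let C be a stable category with a t-structure compatible with filtered colimits, and let q : C → C/C^{≤-∞} be the Verdier quotient by the full subcategory of infinitely connective objects, equipped with the induced t-structure. Then q restricts to an equivalence on eventually coconnective objects: C^+ ≃ (C/C^{≤-∞})^+. -/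
open CategoryTheory Limits Pretriangulated Triangulated

namespace CategoryTheory.Triangulated

structure Subcategory (C : Type*) [Category C] [Preadditive C] [HasZeroObject C] [HasShift C ℤ]
    [∀ n : ℤ, (shiftFunctor C n).Additive] [Pretriangulated C] where
  P : C → Prop
  zero' : ∃ (Z : C) (_ : IsZero Z), P Z
  shift (X : C) (n : ℤ) : P X → P (X⟦n⟧)
  ext₂' (T : Triangle C) (_ : T ∈ distTriang C) : P T.obj₁ → P T.obj₃ →
    ObjectProperty.isoClosure P T.obj₂

namespace Subcategory

def W {C : Type*} [Category C] [Preadditive C] [HasZeroObject C] [HasShift C ℤ]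
    [∀ n : ℤ, (shiftFunctor C n).Additive] [Pretriangulated C] (S : Subcategory C) :
    MorphismProperty C :=
  fun X Y f => ∃ (Z : C) (g : Y ⟶ Z) (h : Z ⟶ X⟦(1 : ℤ)⟧)
    (_ : Triangle.mk f g h ∈ distTriang C), S.P Z

end Subcategory

end CategoryTheory.Triangulated

/-!
A localization functor `L : C ⥤ D` at `W` is bijective on morphisms into any `W`-local object `Z`:
the presheaf `Hom(-, Z)` inverts `W`, so it descends along `L`, and the descended presheaf is
represented by `L Z`. The Verdier quotient map `q` is such a localization, and for it the `S.W`-local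
objects are the right orthogonal of `S`; an eventually coconnective object receives no nonzero map
from an infinitely connective one, hence is local. Lifting coconnective objects is immediate from the
description of the induced t-structure.
-/

namespace CategoryTheory.MorphismProperty

universe w v₁ v₂ u₁ u₂

variable {C : Type u₁} [Category.{v₁} C] {D : Type u₂} [Category.{v₂} D] {W : MorphismProperty C}
  {Z : C}

lemma isLocal.isInvertedBy_uliftYoneda (hZ : W.isLocal Z) :
    W.op.IsInvertedBy (uliftYoneda.{w}.obj Z) :=
  IsInvertedBy.of_comp _ _ (fun _ _ f hf => (isIso_iff_bijective _).2 (hZ f.unop hf)) _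

lemma isLocal.isIso_uliftYonedaMap (hZ : W.isLocal Z) (L : C ⥤ D) [L.IsLocalization W] :
    IsIso (uliftYonedaMap.{w} L Z) := by
  have hF : W.op.IsInvertedBy (uliftYoneda.{max w v₂}.obj Z) := hZ.isInvertedBy_uliftYoneda
  let G := Localization.lift _ hF L.op
  let e : L.op ⋙ G ≅ _ := Localization.fac _ hF L.op
  let β : G ⟶ uliftYoneda.{max w v₁}.obj (L.obj Z) :=
    Localization.liftNatTrans L.op W.op _ _ _ _ (uliftYonedaMap.{w} L Z)
  have hβ : ∀ X : Cᵒᵖ, β.app (L.op.obj X) = e.hom.app X ≫ (uliftYonedaMap.{w} L Z).app X :=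
    fun X => (Localization.liftNatTrans_app _ _ _ _ _ _ _ X).trans
      (congrArg (_ ≫ ·) (Category.comp_id _))
  let γ : uliftYoneda.{max w v₁}.obj (L.obj Z) ⟶ G :=
    uliftYonedaEquiv.symm (e.inv.app (Opposite.op Z) (ULift.up (𝟙 Z)))
  have hγβ : γ ≫ β = 𝟙 _ := by
    apply uliftYonedaEquiv.injective
    rw [uliftYonedaEquiv_comp, Equiv.apply_symm_apply]
    erw [hβ (Opposite.op Z), comp_apply, Iso.inv_hom_id_app_apply]
    exact congrArg ULift.up (L.map_id Z)
  have hτγ : uliftYonedaMap.{w} L Z ≫ Functor.whiskerLeft L.op γ = e.inv := by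
    apply uliftYonedaEquiv.injective
    rw [uliftYonedaEquiv_comp]
    simp only [uliftYonedaEquiv_apply]
    rw [show (uliftYonedaMap.{w} L Z).app (Opposite.op Z) (ULift.up (𝟙 Z)) = ULift.up (L.map (𝟙 Z))
      from rfl, L.map_id]
    exact (uliftYonedaEquiv.{max w v₁} (C := D)).apply_symm_apply _
  have hβγ : β ≫ γ = 𝟙 _ := by
    refine Localization.natTrans_ext L.op W.op fun X => ?_
    rw [NatTrans.comp_app, hβ, Category.assoc, ← Functor.whiskerLeft_app, ← NatTrans.comp_app, hτγ,
      Iso.hom_inv_id_app]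
    rfl
  have : IsIso β := ⟨γ, hβγ, hγβ⟩
  rw [NatTrans.isIso_iff_isIso_app]
  intro X
  rw [← Iso.inv_hom_id_app_assoc e X ((uliftYonedaMap.{w} L Z).app X), ← hβ]
  infer_instance

lemma isLocal.map_bijective (hZ : W.isLocal Z) (L : C ⥤ D) [L.IsLocalization W] (X : C) :
    Function.Bijective (L.map : (X ⟶ Z) → (L.obj X ⟶ L.obj Z)) := by
  have := hZ.isIso_uliftYonedaMap.{0} L
  have h := (isIso_iff_bijective ((uliftYonedaMap.{0} L Z).app (Opposite.op X))).1 inferInstance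
  exact (Equiv.ulift.bijective.comp h).comp Equiv.ulift.symm.bijective

end CategoryTheory.MorphismProperty

namespace CategoryTheory.Triangulated.Subcategory

variable {C : Type*} [Category C] [Preadditive C] [HasZeroObject C] [HasShift C ℤ]
  [∀ n : ℤ, (shiftFunctor C n).Additive] [Pretriangulated C] (S : Subcategory C)

instance : ObjectProperty.IsTriangulated (S.P : ObjectProperty C) where
  exists_zero := by
    obtain ⟨Z, hZ, hP⟩ := S.zero'
    exact ⟨Z, hZ, hP⟩
  isStableUnderShiftBy n := ⟨fun X hX => S.shift X n hX⟩
  ext₂' := S.ext₂'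

lemma isLocal_W : S.W.isLocal = ObjectProperty.rightOrthogonal (S.P : ObjectProperty C) :=
  ObjectProperty.isLocal_trW _

lemma isLocal_W_of_ge (t : TStructure C) (hS : ∀ X, S.P X → ∀ m, t.le m X) {Y : C} {n : ℤ}
    (hY : t.ge n Y) : S.W.isLocal Y := by
  rw [S.isLocal_W]
  exact fun X f hX => t.zero_of_isLE_of_isGE f (n - 1) n (by omega) ⟨hS X hX _⟩ ⟨hY⟩

end CategoryTheory.Triangulated.Subcategory

variable {C : Type*} [Category C] [Preadditive C] [HasZeroObject C] [HasShift C ℤ]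
  [∀ n : ℤ, (shiftFunctor C n).Additive] [Pretriangulated C]
variable {D : Type*} [Category D]

/-- Let `C` be a stable (pretriangulated) category with a
t-structure `t`, let `S` be the triangulated subcategory of infinitely connective
objects (`S.P X ↔ X ∈ ∩ₙ C^{≤n}`), and let `q : C ⥤ D` be the Verdier quotient of
`C` by `S` (i.e. the localization at `S.W`).  With the induced t-structure on the
quotient (whose coconnectivity predicate is `quotGE`), `q` restricts to an
equivalence on eventually coconnective objects `C⁺ ≃ (C/C^{≤-∞})⁺`: for all `x` and
all eventually coconnective `y`, `Hom(x, y) → Hom(q x, q y)` is a bijection, and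
every eventually coconnective object of the quotient lifts to an eventually
coconnective object of `C`. -/
theorem verdier_quotient_by_infinitely_connective_equiv_on_coconnective
    (t : TStructure C) (S : Subcategory C)
    (hS : ∀ X : C, S.P X ↔ ∀ n : ℤ, t.le n X)
    (q : C ⥤ D) [q.IsLocalization S.W]
    -- the induced coconnectivity predicate on the Verdier quotient
    (quotGE : ℤ → D → Prop)
    (hquotGE : ∀ (n : ℤ) (Z : D),
      quotGE n Z ↔ ∃ Y : C, t.ge n Y ∧ Nonempty (q.obj Y ≅ Z)) :
    (∀ (x y : C), (∃ n : ℤ, t.ge n y) →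
      Function.Bijective (fun f : x ⟶ y => q.map f)) ∧
    (∀ Z : D, (∃ n : ℤ, quotGE n Z) →
      ∃ (y : C) (n : ℤ), t.ge n y ∧ Nonempty (q.obj y ≅ Z)) := by
  refine ⟨fun x y ⟨n, hy⟩ => ?_, fun Z ⟨n, hZ⟩ => ?_⟩
  · exact (S.isLocal_W_of_ge t (fun X hX => (hS X).1 hX) hy).map_bijective q x
  · obtain ⟨y, hy, e⟩ := (hquotGE n Z).1 hZ
    exact ⟨y, n, hy, e⟩
end
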